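/- arXiv:2502.21204 — 2 statements merged into one kernel-verified Lean document; each statement's English description precedes it below -/
import Mathlib

section
/- Let T = (V,E) be a tree with at least 3 edges and no internal vertex of degree 2, let u be an internal vertex and v ∈ N(u). Then G_T^{(u,v)} := conv{ c^{i↔j} : i,j distinct leaves, and either {u,v} ∈ i↔j, or {u,w} ∉ i↔j for every w ∈ N(u) } equals P_T ∩ { x : −x_{{u,v}} + ∑_{w ∈ N(u)\{v}} x_{{u,w}} = 0 } and is a facet of P_T, i.e., has dimension |E| − 2. -/
open Classical SimpleGraph

noncomputable section

variable {V : Type*}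

/-- A leaf: a vertex with exactly one neighbor. -/
def IsLeaf (G : SimpleGraph V) (v : V) : Prop := ∃! w, G.Adj v w

/-- `e` is an edge on the (unique, for trees) path between `i` and `j`. -/
def onPath (G : SimpleGraph V) (i j : V) (e : Sym2 V) : Prop :=
  ∃ p : G.Walk i j, p.IsPath ∧ e ∈ p.edges

/-- The edge indicator vector `c^{i↔j}` of the path between `i` and `j`. -/
def pathVec (G : SimpleGraph V) (i j : V) : Sym2 V → ℝ :=
  fun e => if onPath G i j e then 1 else 0

/-- The path polytope `P_T`: the convex hull of the indicator vectors of the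
paths between pairs of distinct leaves. -/
def pathPolytope (G : SimpleGraph V) : Set (Sym2 V → ℝ) :=
  convexHull ℝ {x | ∃ i j : V, i ≠ j ∧ IsLeaf G i ∧ IsLeaf G j ∧ x = pathVec G i j}

/-- `E_leaf(T)`: edges incident to at least one leaf. -/
def leafEdges (G : SimpleGraph V) : Set (Sym2 V) :=
  {e | e ∈ G.edgeSet ∧ ∃ v ∈ e, IsLeaf G v}

/-- A face of `P`: the intersection of `P` with the boundary hyperplane of a valid
linear inequality. -/
def IsFaceOf {E : Type*} [AddCommGroup E] [Module ℝ E] (P F : Set E) : Prop :=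
  ∃ (a : E →ₗ[ℝ] ℝ) (b : ℝ), (∀ x ∈ P, a x ≤ b) ∧ F = {x ∈ P | a x = b}

/-- The dimension of a polytope: the rank of the direction of its affine span. -/
def polyDim {E : Type*} [AddCommGroup E] [Module ℝ E] (P : Set E) : ℕ :=
  Module.finrank ℝ (affineSpan ℝ P).direction

/-- A facet: a face of dimension `dim P − 1`. -/
def IsFacetOf {E : Type*} [AddCommGroup E] [Module ℝ E] (P F : Set E) : Prop :=
  IsFaceOf P F ∧ polyDim F + 1 = polyDim P

/-!
Write `a(x) = ∑_{w ∈ N(u)} x_{uw} - 2 x_{uv}`, which is `-x_{uv} + ∑_{w ≠ v} x_{uw}`. On the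
vector of a leaf path, `a` is `2` if the path passes through `u` without using `uv`, and `0`
otherwise; so `a ≥ 0` is valid on `P_T` and its face is the hull of the listed path vectors.

The sum over all leaves `l` of `∑_{w ∈ N(l)} x_{lw}` is `2` on every leaf path vector, so `P_T`
has dimension one less than the linear span of its vertices. That span contains every unit
vector `e_{ab}`: take leaves `i₁, i₂` on the side of `a` whose paths to `a` arrive through
different edges (`i₁ = i₂ = a` if `a` is a leaf), and `j₁, j₂` likewise on the side of `b`; then
`2 e_{ab} = c^{i₁j₁} + c^{i₂j₂} - c^{i₁i₂} - c^{j₁j₂}`. Such leaves exist because no inner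
vertex has degree `2`. Hence `dim P_T = |E| - 1`.

For the facet, fix a leaf `k` behind `v`. A leaf path `i ↔ j` through `u` avoiding `uv`
satisfies `c^{ij} = c^{ik} + c^{jk} - 2 c^{u↔k}` with `c^{ik}`, `c^{jk}` vertices of the facet,
so any two such vectors differ by a vector parallel to the facet, which therefore has
codimension one in `P_T`.
-/

open Module

section Convex

variable {E : Type*} [AddCommGroup E] [Module ℝ E]

theorem convexHull_sep_eq_inter {s : Set E} (f : E →ₗ[ℝ] ℝ) (hs : ∀ x ∈ s, 0 ≤ f x) :
    convexHull ℝ {x ∈ s | f x = 0} = convexHull ℝ s ∩ {x | f x = 0} := by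
  refine subset_antisymm
    (convexHull_min (fun x hx => ⟨subset_convexHull ℝ s hx.1, hx.2⟩)
      ((convex_convexHull ℝ s).inter (convex_hyperplane f.isLinear 0))) ?_
  rintro _ ⟨hx, hfx⟩
  obtain ⟨ι, t, w, z, hw₀, hw₁, hz, rfl⟩ := (convexHull_eq s).subset hx
  have hterm : ∀ i ∈ t, w i * f (z i) = 0 := by
    refine (Finset.sum_eq_zero_iff_of_nonneg fun i hi =>
      mul_nonneg (hw₀ i hi) (hs _ (hz i hi))).1 ?_
    simpa [Finset.centerMass_eq_of_sum_1 _ _ hw₁, map_sum] using hfx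
  rw [← Finset.centerMass_filter_ne_zero]
  refine Finset.centerMass_mem_convexHull _ (fun i hi => hw₀ i (Finset.mem_filter.1 hi).1)
    (by rw [Finset.sum_filter_ne_zero, hw₁]; exact one_pos) fun i hi => ?_
  obtain ⟨hit, hwi⟩ := Finset.mem_filter.1 hi
  exact ⟨hz i hit, (mul_eq_zero.1 (hterm i hit)).resolve_left hwi⟩

theorem isFaceOf_convexHull {s : Set E} (f : E →ₗ[ℝ] ℝ) (hs : ∀ x ∈ s, 0 ≤ f x) :
    IsFaceOf (convexHull ℝ s) (convexHull ℝ {x ∈ s | f x = 0}) := by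
  refine ⟨-f, 0, fun x hx => ?_, ?_⟩
  · have : 0 ≤ f x := convexHull_min hs (convex_halfSpace_ge f.isLinear 0) hx
    simpa using this
  · ext x
    simp [convexHull_sep_eq_inter f hs]

theorem polyDim_convexHull (s : Set E) :
    polyDim (convexHull ℝ s) = finrank ℝ (vectorSpan ℝ s) := by
  rw [polyDim, affineSpan_convexHull, direction_affineSpan]

theorem vectorSpan_le_ker {s : Set E} (f : E →ₗ[ℝ] ℝ) {c : ℝ} (hs : ∀ x ∈ s, f x = c) :
    vectorSpan ℝ s ≤ LinearMap.ker f := by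
  rw [vectorSpan_def, Submodule.span_le]
  rintro _ ⟨x, hx, y, hy, rfl⟩
  simp [hs x hx, hs y hy]

variable [FiniteDimensional ℝ E]

theorem finrank_span_eq_finrank_vectorSpan_add_one {s : Set E} (f : E →ₗ[ℝ] ℝ) {c : ℝ}
    (hc : c ≠ 0) (hs : ∀ x ∈ s, f x = c) (hne : s.Nonempty) :
    finrank ℝ (Submodule.span ℝ s) = finrank ℝ (vectorSpan ℝ s) + 1 := by
  obtain ⟨p, hp⟩ := hne
  have hspan : Submodule.span ℝ s = vectorSpan ℝ s ⊔ Submodule.span ℝ {p} := by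
    refine le_antisymm (Submodule.span_le.2 fun x hx => ?_) (sup_le ?_ ?_)
    · rw [← sub_add_cancel x p]
      exact Submodule.add_mem_sup (vsub_mem_vectorSpan ℝ hx hp)
        (Submodule.mem_span_singleton_self p)
    · rw [vectorSpan_def, Submodule.span_le]
      rintro _ ⟨x, hx, y, hy, rfl⟩
      exact sub_mem (Submodule.subset_span hx) (Submodule.subset_span hy)
    · exact Submodule.span_mono (Set.singleton_subset_iff.2 hp)
  rw [hspan, Submodule.finrank_sup_span_singleton fun h => hc ?_]
  rw [← hs p hp]
  exact vectorSpan_le_ker f hs h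

theorem finrank_vectorSpan_eq_finrank_vectorSpan_sep_add_one {t : Set E} (f : E →ₗ[ℝ] ℝ)
    {p q : E} (hp : p ∈ t) (hfp : f p ≠ 0) (hq : q ∈ t) (hfq : f q = 0)
    (h : ∀ x ∈ t, f x ≠ 0 → x - p ∈ vectorSpan ℝ {x ∈ t | f x = 0}) :
    finrank ℝ (vectorSpan ℝ t) = finrank ℝ (vectorSpan ℝ {x ∈ t | f x = 0}) + 1 := by
  have hspan :
      vectorSpan ℝ t = vectorSpan ℝ {x ∈ t | f x = 0} ⊔ Submodule.span ℝ {p - q} := by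
    refine le_antisymm ?_ (sup_le (vectorSpan_mono ℝ (Set.sep_subset _ _)) ?_)
    · rw [vectorSpan_eq_span_vsub_set_right ℝ hq, Submodule.span_le]
      rintro _ ⟨x, hx, rfl⟩
      by_cases hfx : f x = 0
      · exact Submodule.mem_sup_left (vsub_mem_vectorSpan ℝ ⟨hx, hfx⟩ ⟨hq, hfq⟩)
      · show x - q ∈ _
        rw [← sub_add_sub_cancel x p q]
        exact Submodule.add_mem_sup (h x hx hfx) (Submodule.mem_span_singleton_self _)
    · rw [Submodule.span_singleton_le_iff_mem]
      exact vsub_mem_vectorSpan ℝ hp hq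
  rw [hspan, Submodule.finrank_sup_span_singleton fun hmem => hfp ?_]
  simpa [hfq] using vectorSpan_le_ker f (fun x (hx : x ∈ {x ∈ t | f x = 0}) => hx.2) hmem

end Convex

section Paths

variable {G : SimpleGraph V} {a b c i j k x y z : V}

theorem pathVec_comm (G : SimpleGraph V) (i j : V) : pathVec G i j = pathVec G j i := by
  have h : ∀ {i j : V} {e}, onPath G i j e → onPath G j i e := fun ⟨p, hp, he⟩ =>
    ⟨p.reverse, hp.reverse, by rwa [Walk.edges_reverse, List.mem_reverse]⟩
  funext e
  simp only [pathVec, show onPath G i j e ↔ onPath G j i e from ⟨h, h⟩]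

@[simp]
theorem pathVec_self (G : SimpleGraph V) (i : V) : pathVec G i i = 0 := by
  funext e
  simp only [pathVec, Pi.zero_apply, ite_eq_right_iff, one_ne_zero, imp_false]
  rintro ⟨p, hp, he⟩
  rw [Walk.isPath_iff_nil.1 hp |>.eq_nil] at he
  simp at he

theorem pathVec_nonneg (G : SimpleGraph V) (i j : V) (e : Sym2 V) : 0 ≤ pathVec G i j e := by
  unfold pathVec; split_ifs <;> norm_num

theorem pathVec_le_one (G : SimpleGraph V) (i j : V) (e : Sym2 V) : pathVec G i j e ≤ 1 := by
  unfold pathVec; split_ifs <;> norm_num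

theorem onPath_iff_mem_edges (hG : G.IsTree) {p : G.Walk i j} (hp : p.IsPath) {e : Sym2 V} :
    onPath G i j e ↔ e ∈ p.edges :=
  ⟨fun ⟨_, hq, he⟩ => (hG.existsUnique_path i j).unique hq hp ▸ he, fun he => ⟨p, hp, he⟩⟩

theorem pathVec_eq_sum_single (hG : G.IsTree) {p : G.Walk i j} (hp : p.IsPath) :
    pathVec G i j = ∑ e ∈ p.edges.toFinset, Pi.single e 1 := by
  funext e
  simp [pathVec, onPath_iff_mem_edges hG hp, Finset.sum_apply, Pi.single_apply]

theorem pathVec_of_adj (hG : G.IsTree) (h : G.Adj a b) :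
    pathVec G a b = Pi.single s(a, b) 1 := by
  have hp : (Walk.cons h .nil).IsPath := Walk.IsPath.nil.cons (by simpa using h.ne)
  simp [pathVec_eq_sum_single hG hp]

theorem pathVec_append (hG : G.IsTree) {p : G.Walk x z} {q : G.Walk z y}
    (h : (p.append q).IsPath) : pathVec G x y = pathVec G x z + pathVec G z y := by
  have hdisj := h.edges_nodup
  rw [Walk.edges_append, List.nodup_append] at hdisj
  funext e
  simp only [pathVec, Pi.add_apply, onPath_iff_mem_edges hG h,
    onPath_iff_mem_edges hG h.of_append_left, onPath_iff_mem_edges hG h.of_append_right,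
    Walk.edges_append, List.mem_append]
  by_cases hp : e ∈ p.edges
  · simp [hp, show e ∉ q.edges from fun hq => hdisj.2.2 e hp e hq rfl]
  · by_cases hq : e ∈ q.edges <;> simp [hp, hq]

theorem pathVec_eq_add_of_mem_support (hG : G.IsTree) {p : G.Walk x y} (hp : p.IsPath)
    (hz : z ∈ p.support) : pathVec G x y = pathVec G z x + pathVec G z y := by
  rw [← p.take_spec hz] at hp
  rw [pathVec_append hG hp, pathVec_comm G x z]

theorem pathVec_eq_zero_of_not_mem_support (hG : G.IsTree) {p : G.Walk x y} (hp : p.IsPath)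
    (hz : z ∉ p.support) (w : V) : pathVec G x y s(z, w) = 0 :=
  if_neg fun h => hz (p.fst_mem_support_of_mem_edges ((onPath_iff_mem_edges hG hp).1 h))

theorem SimpleGraph.Walk.IsPath.reverse_append {p : G.Walk z x} {q : G.Walk z y}
    (hp : p.IsPath) (hq : q.IsPath) (h : ∀ w ∈ p.support, w ∈ q.support → w = z) :
    (p.reverse.append q).IsPath := by
  rw [Walk.isPath_def, Walk.support_append, Walk.support_reverse]
  refine List.nodup_append.2 ⟨List.nodup_reverse.2 hp.support_nodup, hq.support_nodup.tail,
    fun w hwp w' hwq hww' => ?_⟩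
  subst hww'
  have hq' := hq.support_nodup
  rw [← q.cons_tail_support] at hq'
  exact (List.nodup_cons.1 hq').1
    (h w (List.mem_reverse.1 hwp) (q.cons_tail_support ▸ List.mem_cons_of_mem _ hwq) ▸ hwq)

end Paths

section Beyond

variable {G : SimpleGraph V} {a b c w x y z : V}

/-- In a tree, `x` lies in the component of `G - ab` containing `b`, i.e. the path from `a` to
`x` leaves `a` through `b`. -/
def Beyond (G : SimpleGraph V) (a b x : V) : Prop := onPath G a x s(a, b)

theorem Beyond.adj (h : Beyond G a b x) : G.Adj a b := by
  obtain ⟨p, -, he⟩ := h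
  exact p.adj_of_mem_edges he

theorem Beyond.ne (h : Beyond G a b x) : x ≠ a := by
  rintro rfl
  obtain ⟨p, hp, he⟩ := h
  rw [Walk.isPath_iff_nil.1 hp |>.eq_nil] at he
  simp at he

theorem beyond_of_adj (h : G.Adj a b) : Beyond G a b b :=
  ⟨.cons h .nil, Walk.IsPath.nil.cons (by simpa using h.ne), by simp⟩

theorem beyond_snd_of_mem_support {p : G.Walk a x} (hp : p.IsPath) (hw : w ∈ p.support)
    (hwa : w ≠ a) : Beyond G a p.snd w := by
  cases p with
  | nil => exact absurd (by simpa using hw) hwa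
  | cons h p' =>
    rw [Walk.cons_isPath_iff] at hp
    have hw' : w ∈ p'.support := by simpa [hwa] using hw
    exact ⟨.cons h (p'.takeUntil w hw'),
      (hp.1.takeUntil hw').cons fun ha => hp.2 (p'.support_takeUntil_subset_support hw' ha),
      by simp⟩

theorem Beyond.snd_eq (hG : G.IsTree) (h : Beyond G a b x) {p : G.Walk a x} (hp : p.IsPath) :
    p.snd = b :=
  hp.snd_of_toSubgraph_adj <|
    Walk.adj_toSubgraph_iff_mem_edges.2 ((onPath_iff_mem_edges hG hp).1 h)

theorem Beyond.unique (hG : G.IsTree) (hb : Beyond G a b x) (hc : Beyond G a c x) : b = c := by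
  obtain ⟨p, hp, -⟩ := hG.existsUnique_path a x
  exact (hb.snd_eq hG hp).symm.trans (hc.snd_eq hG hp)

theorem exists_beyond (hG : G.IsTree) (hx : x ≠ a) : ∃ b, Beyond G a b x := by
  obtain ⟨p, hp, -⟩ := hG.existsUnique_path a x
  exact ⟨p.snd, beyond_snd_of_mem_support hp p.end_mem_support hx⟩

theorem beyond_of_not_beyond (hG : G.IsTree) (hab : G.Adj a b) (h : ¬Beyond G b a x) :
    Beyond G a b x := by
  obtain ⟨q, hq, -⟩ := hG.existsUnique_path b x
  have ha : a ∉ q.support := by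
    intro ha
    have hxb : x ≠ b := by
      rintro rfl
      rw [Walk.isPath_iff_nil.1 hq |>.eq_nil] at ha
      exact hab.ne (by simpa using ha)
    apply h
    rw [hG.isAcyclic.eq_snd_of_adj_start hq hab.symm ha]
    exact beyond_snd_of_mem_support hq q.end_mem_support hxb
  exact ⟨.cons hab q, hq.cons ha, by simp⟩

theorem Beyond.pathVec_eq (hG : G.IsTree) (h : Beyond G a b x) :
    pathVec G a x = Pi.single s(a, b) 1 + pathVec G b x := by
  obtain ⟨p, hp, -⟩ := hG.existsUnique_path a x
  have hsnd := h.snd_eq hG hp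
  cases p with
  | nil => exact absurd rfl h.ne
  | cons hac p' =>
    rw [Walk.snd_cons] at hsnd
    subst hsnd
    rw [← pathVec_of_adj hG hac]
    exact pathVec_append hG (p := .cons hac .nil) (q := p') hp

theorem pathVec_eq_add_of_beyond (hG : G.IsTree) (hx : ¬Beyond G z c x) (hy : Beyond G z c y) :
    pathVec G x y = pathVec G z x + pathVec G z y := by
  obtain ⟨p, hp, -⟩ := hG.existsUnique_path z x
  obtain ⟨q, hq, -⟩ := hG.existsUnique_path z y
  -- the two paths leave `z` through different neighbours, hence meet only at `z`
  have hpq := hp.reverse_append hq fun w hwp hwq => by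
    by_contra hwz
    have hxz : x ≠ z := by
      rintro rfl
      rw [Walk.isPath_iff_nil.1 hp |>.eq_nil] at hwp
      exact hwz (by simpa using hwp)
    apply hx
    rw [← hy.snd_eq hG hq, ← (beyond_snd_of_mem_support hp hwp hwz).unique hG
      (beyond_snd_of_mem_support hq hwq hwz)]
    exact beyond_snd_of_mem_support hp p.end_mem_support hxz
  rw [pathVec_append hG hpq, pathVec_comm G x z]

theorem pathVec_eq_add_single_add (hG : G.IsTree) (hab : G.Adj a b) (hx : ¬Beyond G a b x)
    (hy : ¬Beyond G b a y) :
    pathVec G x y = pathVec G a x + Pi.single s(a, b) 1 + pathVec G b y := by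
  have hy' := beyond_of_not_beyond hG hab hy
  rw [pathVec_eq_add_of_beyond hG hx hy', hy'.pathVec_eq hG, add_assoc]

end Beyond

def leafPathVecs (G : SimpleGraph V) : Set (Sym2 V → ℝ) :=
  {x | ∃ i j : V, i ≠ j ∧ IsLeaf G i ∧ IsLeaf G j ∧ x = pathVec G i j}

theorem pathVec_mem_span_leafPathVecs {G : SimpleGraph V} {i j : V} (hi : IsLeaf G i)
    (hj : IsLeaf G j) : pathVec G i j ∈ Submodule.span ℝ (leafPathVecs G) := by
  rcases eq_or_ne i j with rfl | hij
  · simp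
  · exact Submodule.subset_span ⟨i, j, hij, hi, hj, rfl⟩

theorem IsLeaf.ne_of_not_isLeaf {G : SimpleGraph V} {l u : V} (hl : IsLeaf G l)
    (hu : ¬IsLeaf G u) : l ≠ u :=
  fun h => hu (h ▸ hl)

section Finite

variable [Fintype V] {G : SimpleGraph V} {a b i j k l u v x y z : V}

def starSum (G : SimpleGraph V) (z : V) : (Sym2 V → ℝ) →ₗ[ℝ] ℝ :=
  ∑ w ∈ G.neighborFinset z, LinearMap.proj s(z, w)

theorem starSum_apply (x : Sym2 V → ℝ) :
    starSum G z x = ∑ w ∈ G.neighborFinset z, x s(z, w) := by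
  simp [starSum]

theorem starSum_pathVec_self_left (hG : G.IsTree) (z x : V) :
    starSum G z (pathVec G z x) = if x = z then 0 else 1 := by
  split_ifs with hxz
  · simp [hxz]
  obtain ⟨b, hb⟩ := exists_beyond hG hxz
  have h : ∀ w, pathVec G z x s(z, w) = if b = w then 1 else 0 := fun w =>
    if_congr ⟨fun h => hb.unique hG h, fun h => h ▸ hb⟩ rfl rfl
  simp [starSum_apply, h, hb.adj]

theorem starSum_pathVec_of_mem_support (hG : G.IsTree) {p : G.Walk x y} (hp : p.IsPath)
    (hz : z ∈ p.support) :
    starSum G z (pathVec G x y) = (if x = z then 0 else 1) + (if y = z then 0 else 1) := by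
  rw [pathVec_eq_add_of_mem_support hG hp hz, map_add, starSum_pathVec_self_left hG,
    starSum_pathVec_self_left hG]

theorem starSum_pathVec_of_not_mem_support (hG : G.IsTree) {p : G.Walk x y} (hp : p.IsPath)
    (hz : z ∉ p.support) : starSum G z (pathVec G x y) = 0 := by
  simp [starSum_apply, pathVec_eq_zero_of_not_mem_support hG hp hz]

theorem starSum_pathVec_le_one_of_isLeaf (hl : IsLeaf G l) (i j : V) :
    starSum G l (pathVec G i j) ≤ 1 := by
  obtain ⟨n, hn, huniq⟩ := hl
  have : G.neighborFinset l = {n} := Finset.eq_singleton_iff_unique_mem.2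
    ⟨by simpa using hn, fun w hw => huniq w (by simpa using hw)⟩
  rw [starSum_apply, this, Finset.sum_singleton]
  exact pathVec_le_one G i j _

theorem starSum_pathVec_of_isLeaf (hG : G.IsTree) (hl : IsLeaf G l) (hij : i ≠ j) :
    starSum G l (pathVec G i j) = if l = i ∨ l = j then 1 else 0 := by
  obtain ⟨p, hp, -⟩ := hG.existsUnique_path i j
  by_cases hlp : l ∈ p.support
  · have h := starSum_pathVec_le_one_of_isLeaf hl i j
    rw [starSum_pathVec_of_mem_support hG hp hlp] at h ⊢
    rcases eq_or_ne i l with rfl | hil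
    · simp [hij.symm]
    rcases eq_or_ne j l with rfl | hjl
    · simp [hil]
    · rw [if_neg hil, if_neg hjl] at h
      norm_num at h
  · rw [starSum_pathVec_of_not_mem_support hG hp hlp, if_neg]
    rintro (rfl | rfl)
    exacts [hlp p.start_mem_support, hlp p.end_mem_support]

def leafSum (G : SimpleGraph V) : (Sym2 V → ℝ) →ₗ[ℝ] ℝ :=
  ∑ l ∈ Finset.univ.filter (IsLeaf G), starSum G l

theorem leafSum_pathVec (hG : G.IsTree) (hi : IsLeaf G i) (hj : IsLeaf G j) (hij : i ≠ j) :
    leafSum G (pathVec G i j) = 2 := by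
  have h : ∀ l ∈ Finset.univ.filter (IsLeaf G), starSum G l (pathVec G i j) =
      if l ∈ ({i, j} : Finset V) then 1 else 0 := fun l hl => by
    rw [starSum_pathVec_of_isLeaf hG (Finset.mem_filter.1 hl).2 hij]
    simp
  rw [leafSum, LinearMap.sum_apply, Finset.sum_congr rfl h,
    ← Finset.sum_filter, Finset.sum_const]
  have : {l ∈ Finset.univ.filter (IsLeaf G) | l ∈ ({i, j} : Finset V)} = {i, j} := by
    ext l
    simp only [Finset.mem_filter, Finset.mem_univ, true_and, Finset.mem_insert,
      Finset.mem_singleton]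
    constructor
    · exact fun h => h.2
    · rintro (rfl | rfl) <;> simp_all
  rw [this, Finset.card_pair hij]
  norm_num

theorem exists_isLeaf_beyond (hG : G.IsTree) (hab : G.Adj a b) :
    ∃ l, IsLeaf G l ∧ Beyond G a b l := by
  -- a vertex beyond `b` whose path from `a` is longest is a leaf
  obtain ⟨l, hl, hmax⟩ := (Finset.univ.filter (Beyond G a b)).exists_max_image
    (fun x => ∑ e, pathVec G a x e) ⟨b, by simpa using beyond_of_adj hab⟩
  replace hl : Beyond G a b l := (Finset.mem_filter.1 hl).2
  obtain ⟨m, hm⟩ := exists_beyond hG hl.ne.symm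
  refine ⟨l, ⟨m, hm.adj, fun y hy => by_contra fun hym => ?_⟩, hl⟩
  have hext : pathVec G a y = pathVec G a l + Pi.single s(l, y) 1 := by
    rw [pathVec_eq_add_of_beyond hG (fun h => hym (h.unique hG hm)) (beyond_of_adj hy),
      pathVec_comm G l a, pathVec_of_adj hG hy]
  have hy' : Beyond G a b y := by
    by_contra h
    have hab' := congrFun hext s(a, b)
    rw [Pi.add_apply, show pathVec G a y s(a, b) = 0 from if_neg h,
      show pathVec G a l s(a, b) = 1 from if_pos hl, Pi.single_apply] at hab'
    split_ifs at hab' <;> norm_num at hab'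
  have := hmax y (by simpa using hy')
  norm_num [hext, Finset.sum_add_distrib] at this

theorem exists_two_neighbors_ne (hdeg : ∀ w, ¬IsLeaf G w → (G.neighborSet w).ncard ≠ 2)
    (ha : ¬IsLeaf G a) (hab : G.Adj a b) :
    ∃ c₁ c₂, G.Adj a c₁ ∧ G.Adj a c₂ ∧ c₁ ≠ c₂ ∧ c₁ ≠ b ∧ c₂ ≠ b := by
  have h1 : (G.neighborSet a).ncard ≠ 1 := fun h => by
    obtain ⟨n, hn⟩ := Set.ncard_eq_one.1 h
    exact ha ⟨n, show n ∈ G.neighborSet a by simp [hn],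
      fun w hw => by simpa [hn] using (show w ∈ G.neighborSet a from hw)⟩
  have h0 : 0 < (G.neighborSet a).ncard := (Set.ncard_pos (Set.toFinite _)).2 ⟨b, hab⟩
  have h2 : 1 < (G.neighborSet a \ {b}).ncard := by
    rw [Set.ncard_sdiff_singleton_of_mem (show b ∈ G.neighborSet a from hab)]
    have := hdeg a ha
    omega
  obtain ⟨c₁, c₂, h₁, h₂, h₁₂⟩ := (Set.one_lt_ncard_iff (Set.toFinite _)).1 h2
  exact ⟨c₁, c₂, h₁.1, h₂.1, h₁₂, h₁.2, h₂.2⟩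

theorem exists_ne_leaves_not_beyond (hG : G.IsTree)
    (hdeg : ∀ w, ¬IsLeaf G w → (G.neighborSet w).ncard ≠ 2) (ha : ¬IsLeaf G a) (hab : G.Adj a b) :
    ∃ i₁ i₂, IsLeaf G i₁ ∧ IsLeaf G i₂ ∧ i₁ ≠ i₂ ∧ ¬Beyond G a b i₁ ∧ ¬Beyond G a b i₂ ∧
      pathVec G i₁ i₂ = pathVec G a i₁ + pathVec G a i₂ := by
  obtain ⟨c₁, c₂, hc₁, hc₂, hc₁₂, hc₁b, hc₂b⟩ := exists_two_neighbors_ne hdeg ha hab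
  obtain ⟨i₁, hi₁, hb₁⟩ := exists_isLeaf_beyond hG hc₁
  obtain ⟨i₂, hi₂, hb₂⟩ := exists_isLeaf_beyond hG hc₂
  have hn₁ : ¬Beyond G a c₂ i₁ := fun h => hc₁₂ (hb₁.unique hG h)
  exact ⟨i₁, i₂, hi₁, hi₂, fun h => hn₁ (h ▸ hb₂), fun h => hc₁b (hb₁.unique hG h),
    fun h => hc₂b (hb₂.unique hG h), pathVec_eq_add_of_beyond hG hn₁ hb₂⟩

theorem exists_leaves_not_beyond (hG : G.IsTree)
    (hdeg : ∀ w, ¬IsLeaf G w → (G.neighborSet w).ncard ≠ 2) (hab : G.Adj a b) :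
    ∃ i₁ i₂, IsLeaf G i₁ ∧ IsLeaf G i₂ ∧ ¬Beyond G a b i₁ ∧ ¬Beyond G a b i₂ ∧
      pathVec G i₁ i₂ = pathVec G a i₁ + pathVec G a i₂ := by
  by_cases ha : IsLeaf G a
  · exact ⟨a, a, ha, ha, fun h => h.ne rfl, fun h => h.ne rfl, by simp⟩
  · obtain ⟨i₁, i₂, hi₁, hi₂, -, h⟩ := exists_ne_leaves_not_beyond hG hdeg ha hab
    exact ⟨i₁, i₂, hi₁, hi₂, h⟩

theorem single_mem_span_leafPathVecs (hG : G.IsTree)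
    (hdeg : ∀ w, ¬IsLeaf G w → (G.neighborSet w).ncard ≠ 2) (hab : G.Adj a b) :
    Pi.single s(a, b) (1 : ℝ) ∈ Submodule.span ℝ (leafPathVecs G) := by
  obtain ⟨i₁, i₂, hi₁, hi₂, hni₁, hni₂, hi⟩ := exists_leaves_not_beyond hG hdeg hab
  obtain ⟨j₁, j₂, hj₁, hj₂, hnj₁, hnj₂, hj⟩ := exists_leaves_not_beyond hG hdeg hab.symm
  have key : (2 : ℝ) • Pi.single s(a, b) 1 =
      pathVec G i₁ j₁ + pathVec G i₂ j₂ - pathVec G i₁ i₂ - pathVec G j₁ j₂ := by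
    rw [pathVec_eq_add_single_add hG hab hni₁ hnj₁, pathVec_eq_add_single_add hG hab hni₂ hnj₂,
      hi, hj]
    module
  rw [← Submodule.smul_mem_iff _ (two_ne_zero : (2 : ℝ) ≠ 0), key]
  exact sub_mem (sub_mem (add_mem (pathVec_mem_span_leafPathVecs hi₁ hj₁)
    (pathVec_mem_span_leafPathVecs hi₂ hj₂)) (pathVec_mem_span_leafPathVecs hi₁ hi₂))
    (pathVec_mem_span_leafPathVecs hj₁ hj₂)

theorem span_leafPathVecs (hG : G.IsTree)
    (hdeg : ∀ w, ¬IsLeaf G w → (G.neighborSet w).ncard ≠ 2) :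
    Submodule.span ℝ (leafPathVecs G) =
      Submodule.span ℝ
        (Set.range fun e : G.edgeSet => (Pi.single (e : Sym2 V) 1 : Sym2 V → ℝ)) := by
  refine le_antisymm (Submodule.span_le.2 ?_) (Submodule.span_le.2 ?_)
  · rintro _ ⟨i, j, -, -, -, rfl⟩
    obtain ⟨p, hp, -⟩ := hG.existsUnique_path i j
    rw [pathVec_eq_sum_single hG hp]
    exact Submodule.sum_mem _ fun e he => Submodule.subset_span
      ⟨⟨e, p.edges_subset_edgeSet (List.mem_toFinset.1 he)⟩, rfl⟩
  · rintro _ ⟨⟨e, he⟩, rfl⟩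
    induction e using Sym2.ind with
    | _ a b => exact single_mem_span_leafPathVecs hG hdeg he

theorem finrank_span_single_edgeSet (G : SimpleGraph V) :
    finrank ℝ (Submodule.span ℝ
      (Set.range fun e : G.edgeSet => (Pi.single (e : Sym2 V) 1 : Sym2 V → ℝ))) =
        G.edgeSet.ncard := by
  have hli : LinearIndependent ℝ fun e : G.edgeSet => (Pi.single (e : Sym2 V) 1 : Sym2 V → ℝ) :=
    (Pi.linearIndependent_single_one (Sym2 V) ℝ).comp _ Subtype.val_injective
  rw [finrank_span_eq_card hli, ← Nat.card_coe_set_eq, Nat.card_eq_fintype_card]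

theorem finrank_vectorSpan_leafPathVecs (hG : G.IsTree)
    (hdeg : ∀ w, ¬IsLeaf G w → (G.neighborSet w).ncard ≠ 2) (hne : (leafPathVecs G).Nonempty) :
    finrank ℝ (vectorSpan ℝ (leafPathVecs G)) + 1 = G.edgeSet.ncard := by
  rw [← finrank_span_eq_finrank_vectorSpan_add_one (leafSum G) two_ne_zero ?_ hne,
    span_leafPathVecs hG hdeg, finrank_span_single_edgeSet]
  rintro _ ⟨i, j, hij, hi, hj, rfl⟩
  exact leafSum_pathVec hG hi hj hij

end Finite

section Facet

variable [Fintype V] {G : SimpleGraph V} {i j k u v : V}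

def facetFunctional (G : SimpleGraph V) (u v : V) : (Sym2 V → ℝ) →ₗ[ℝ] ℝ :=
  starSum G u - (2 : ℝ) • LinearMap.proj s(u, v)

theorem facetFunctional_apply (x : Sym2 V → ℝ) :
    facetFunctional G u v x = starSum G u x - 2 * x s(u, v) := by
  simp [facetFunctional]

theorem neg_add_finsum_eq_facetFunctional (hv : G.Adj u v) (x : Sym2 V → ℝ) :
    -x s(u, v) + ∑ᶠ w ∈ G.neighborSet u \ {v}, x s(u, w) = facetFunctional G u v x := by
  rw [← coe_neighborFinset, ← Finset.coe_erase, finsum_mem_coe_finset, facetFunctional_apply,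
    starSum_apply, ← Finset.add_sum_erase _ _ ((G.mem_neighborFinset u v).2 hv)]
  ring

theorem facetFunctional_pathVec_add (hG : G.IsTree) (hi : i ≠ u) (hj : j ≠ u) :
    facetFunctional G u v (pathVec G u i + pathVec G u j) =
      2 - 2 * (pathVec G u i + pathVec G u j) s(u, v) := by
  rw [facetFunctional_apply, map_add, starSum_pathVec_self_left hG, starSum_pathVec_self_left hG,
    if_neg hi, if_neg hj]
  norm_num

theorem facetFunctional_pathVec_of_mem_support (hG : G.IsTree) {p : G.Walk i j} (hp : p.IsPath)
    (hu : u ∈ p.support) (hi : i ≠ u) (hj : j ≠ u) :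
    facetFunctional G u v (pathVec G i j) = 2 - 2 * pathVec G i j s(u, v) := by
  rw [pathVec_eq_add_of_mem_support hG hp hu, facetFunctional_pathVec_add hG hi hj]

theorem facetFunctional_pathVec_of_not_mem_support (hG : G.IsTree) {p : G.Walk i j}
    (hp : p.IsPath) (hu : u ∉ p.support) :
    facetFunctional G u v (pathVec G i j) = 0 := by
  rw [facetFunctional_apply, starSum_pathVec_of_not_mem_support hG hp hu,
    pathVec_eq_zero_of_not_mem_support hG hp hu]
  ring

theorem facetFunctional_pathVec_nonneg (hG : G.IsTree) (hu : ¬IsLeaf G u)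
    (hi : IsLeaf G i) (hj : IsLeaf G j) : 0 ≤ facetFunctional G u v (pathVec G i j) := by
  obtain ⟨p, hp, -⟩ := hG.existsUnique_path i j
  by_cases hup : u ∈ p.support
  · rw [facetFunctional_pathVec_of_mem_support hG hp hup (hi.ne_of_not_isLeaf hu)
      (hj.ne_of_not_isLeaf hu)]
    linarith [pathVec_le_one G i j s(u, v)]
  · rw [facetFunctional_pathVec_of_not_mem_support hG hp hup]

theorem facetFunctional_pathVec_eq_zero_iff (hG : G.IsTree) (hu : ¬IsLeaf G u)
    (hi : IsLeaf G i) (hj : IsLeaf G j) :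
    facetFunctional G u v (pathVec G i j) = 0 ↔
      onPath G i j s(u, v) ∨ ∀ w ∈ G.neighborSet u, ¬onPath G i j s(u, w) := by
  obtain ⟨p, hp, -⟩ := hG.existsUnique_path i j
  by_cases hup : u ∈ p.support
  · have hiu := hi.ne_of_not_isLeaf hu
    have hju := hj.ne_of_not_isLeaf hu
    have hedge : ¬∀ w ∈ G.neighborSet u, ¬onPath G i j s(u, w) := fun h => by
      have hsum := starSum_pathVec_of_mem_support hG hp hup
      have hzero : ∑ w ∈ G.neighborFinset u, pathVec G i j s(u, w) = 0 :=
        Finset.sum_eq_zero fun w hw => if_neg (h w (by simpa using hw))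
      rw [if_neg hiu, if_neg hju, starSum_apply, hzero] at hsum
      norm_num at hsum
    rw [facetFunctional_pathVec_of_mem_support hG hp hup hiu hju, or_iff_left hedge, pathVec]
    split_ifs with h <;> simp [h]
  · rw [facetFunctional_pathVec_of_not_mem_support hG hp hup]
    exact iff_of_true rfl <| Or.inr fun w _ h =>
      hup (p.fst_mem_support_of_mem_edges ((onPath_iff_mem_edges hG hp).1 h))

theorem pathVec_eq_add_of_facetFunctional_ne_zero (hG : G.IsTree) (hu : ¬IsLeaf G u)
    (hi : IsLeaf G i) (hj : IsLeaf G j)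
    (h : facetFunctional G u v (pathVec G i j) ≠ 0) :
    ¬Beyond G u v i ∧ ¬Beyond G u v j ∧ pathVec G i j = pathVec G u i + pathVec G u j := by
  obtain ⟨p, hp, -⟩ := hG.existsUnique_path i j
  have hup : u ∈ p.support := by_contra fun hup =>
    h (facetFunctional_pathVec_of_not_mem_support hG hp hup)
  have hsplit := pathVec_eq_add_of_mem_support hG hp hup
  have hle := pathVec_le_one G i j s(u, v)
  rw [hsplit] at h hle
  rw [facetFunctional_pathVec_add hG (hi.ne_of_not_isLeaf hu) (hj.ne_of_not_isLeaf hu),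
    Pi.add_apply] at h
  rw [Pi.add_apply] at hle
  refine ⟨fun hb => h ?_, fun hb => h ?_, hsplit⟩
  · linarith [show pathVec G u i s(u, v) = 1 from if_pos hb, pathVec_nonneg G u j s(u, v)]
  · linarith [show pathVec G u j s(u, v) = 1 from if_pos hb, pathVec_nonneg G u i s(u, v)]

theorem setOf_pathVec_facet_eq (hG : G.IsTree) (hu : ¬IsLeaf G u) :
    {x : Sym2 V → ℝ | ∃ i j : V, i ≠ j ∧ IsLeaf G i ∧ IsLeaf G j ∧
        (onPath G i j s(u, v) ∨ ∀ w ∈ G.neighborSet u, ¬ onPath G i j s(u, w)) ∧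
        x = pathVec G i j} = {x ∈ leafPathVecs G | facetFunctional G u v x = 0} := by
  ext x
  constructor
  · rintro ⟨i, j, hij, hi, hj, hc, rfl⟩
    exact ⟨⟨i, j, hij, hi, hj, rfl⟩, (facetFunctional_pathVec_eq_zero_iff hG hu hi hj).2 hc⟩
  · rintro ⟨⟨i, j, hij, hi, hj, rfl⟩, h⟩
    exact ⟨i, j, hij, hi, hj, (facetFunctional_pathVec_eq_zero_iff hG hu hi hj).1 h, rfl⟩

theorem pathVec_mem_facet_of_beyond (hG : G.IsTree) (hu : ¬IsLeaf G u) (hi : IsLeaf G i)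
    (hni : ¬Beyond G u v i) (hk : IsLeaf G k) (hbk : Beyond G u v k) :
    pathVec G i k ∈ {x ∈ leafPathVecs G | facetFunctional G u v x = 0} ∧
      pathVec G i k = pathVec G u i + pathVec G u k := by
  have hsplit := pathVec_eq_add_of_beyond hG hni hbk
  refine ⟨⟨⟨i, k, fun h => hni (h ▸ hbk), hi, hk, rfl⟩, ?_⟩, hsplit⟩
  rw [hsplit, facetFunctional_pathVec_add hG (hi.ne_of_not_isLeaf hu) hbk.ne, Pi.add_apply,
    show pathVec G u i s(u, v) = 0 from if_neg hni, show pathVec G u k s(u, v) = 1 from if_pos hbk]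
  norm_num

theorem finrank_vectorSpan_leafPathVecs_eq_facet_add_one (hG : G.IsTree)
    (hdeg : ∀ w, ¬IsLeaf G w → (G.neighborSet w).ncard ≠ 2) (hu : ¬IsLeaf G u) (hv : G.Adj u v) :
    finrank ℝ (vectorSpan ℝ (leafPathVecs G)) =
      finrank ℝ (vectorSpan ℝ {x ∈ leafPathVecs G | facetFunctional G u v x = 0}) + 1 := by
  obtain ⟨i₀, j₀, hi₀, hj₀, hij₀, hni₀, hnj₀, hsplit₀⟩ := exists_ne_leaves_not_beyond hG hdeg hu hv
  obtain ⟨k, hk, hbk⟩ := exists_isLeaf_beyond hG hv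
  obtain ⟨hi₀k, hsi₀k⟩ := pathVec_mem_facet_of_beyond hG hu hi₀ hni₀ hk hbk
  obtain ⟨hj₀k, hsj₀k⟩ := pathVec_mem_facet_of_beyond hG hu hj₀ hnj₀ hk hbk
  refine finrank_vectorSpan_eq_finrank_vectorSpan_sep_add_one _ ⟨i₀, j₀, hij₀, hi₀, hj₀, rfl⟩
    ?_ hi₀k.1 hi₀k.2 ?_
  · rw [hsplit₀, facetFunctional_pathVec_add hG (hi₀.ne_of_not_isLeaf hu)
      (hj₀.ne_of_not_isLeaf hu), Pi.add_apply, show pathVec G u i₀ s(u, v) = 0 from if_neg hni₀,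
      show pathVec G u j₀ s(u, v) = 0 from if_neg hnj₀]
    norm_num
  · rintro _ ⟨i, j, -, hi, hj, rfl⟩ hij
    obtain ⟨hni, hnj, hsplit⟩ := pathVec_eq_add_of_facetFunctional_ne_zero hG hu hi hj hij
    obtain ⟨hik, hsik⟩ := pathVec_mem_facet_of_beyond hG hu hi hni hk hbk
    obtain ⟨hjk, hsjk⟩ := pathVec_mem_facet_of_beyond hG hu hj hnj hk hbk
    have key : pathVec G i j - pathVec G i₀ j₀ =
        (pathVec G i k - pathVec G i₀ k) + (pathVec G j k - pathVec G j₀ k) := by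
      rw [hsplit, hsplit₀, hsik, hsjk, hsi₀k, hsj₀k]
      abel
    rw [key]
    exact add_mem (vsub_mem_vectorSpan ℝ hik hi₀k) (vsub_mem_vectorSpan ℝ hjk hj₀k)

end Facet

theorem facet_G_general [Fintype V] (G : SimpleGraph V)
    (hG : G.IsTree)
    (hdeg2 : ∀ w, ¬ IsLeaf G w → (G.neighborSet w).ncard ≠ 2)
    (u v : V) (hu : ¬ IsLeaf G u) (hv : v ∈ G.neighborSet u) :
    convexHull ℝ {x : Sym2 V → ℝ | ∃ i j : V, i ≠ j ∧ IsLeaf G i ∧ IsLeaf G j ∧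
        (onPath G i j s(u, v) ∨ ∀ w ∈ G.neighborSet u, ¬ onPath G i j s(u, w)) ∧
        x = pathVec G i j}
      = pathPolytope G ∩
          {x | - x s(u, v) + ∑ᶠ w ∈ G.neighborSet u \ {v}, x s(u, w) = 0} ∧
    IsFacetOf (pathPolytope G)
      (convexHull ℝ {x : Sym2 V → ℝ | ∃ i j : V, i ≠ j ∧ IsLeaf G i ∧ IsLeaf G j ∧
        (onPath G i j s(u, v) ∨ ∀ w ∈ G.neighborSet u, ¬ onPath G i j s(u, w)) ∧
        x = pathVec G i j}) ∧
    polyDim (convexHull ℝ {x : Sym2 V → ℝ | ∃ i j : V, i ≠ j ∧ IsLeaf G i ∧ IsLeaf G j ∧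
        (onPath G i j s(u, v) ∨ ∀ w ∈ G.neighborSet u, ¬ onPath G i j s(u, w)) ∧
        x = pathVec G i j}) + 2 = G.edgeSet.ncard := by
  have hnonneg : ∀ x ∈ leafPathVecs G, 0 ≤ facetFunctional G u v x := by
    rintro _ ⟨i, j, -, hi, hj, rfl⟩
    exact facetFunctional_pathVec_nonneg hG hu hi hj
  obtain ⟨i₀, j₀, hi₀, hj₀, hij₀, -⟩ := exists_ne_leaves_not_beyond hG hdeg2 hu hv
  have hP := finrank_vectorSpan_leafPathVecs hG hdeg2 ⟨_, i₀, j₀, hij₀, hi₀, hj₀, rfl⟩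
  have hF := finrank_vectorSpan_leafPathVecs_eq_facet_add_one hG hdeg2 hu hv
  have hH : {x : Sym2 V → ℝ | -x s(u, v) + ∑ᶠ w ∈ G.neighborSet u \ {v}, x s(u, w) = 0} =
      {x | facetFunctional G u v x = 0} := by
    simp_rw [neg_add_finsum_eq_facetFunctional hv]
  rw [setOf_pathVec_facet_eq hG hu, show pathPolytope G = convexHull ℝ (leafPathVecs G) from rfl,
    hH, IsFacetOf, polyDim_convexHull, polyDim_convexHull]
  exact ⟨convexHull_sep_eq_inter _ hnonneg, ⟨isFaceOf_convexHull _ hnonneg, by omega⟩, by omega⟩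

/-- For a tree with at least 3 edges and no internal vertex of degree 2,
an internal vertex `u` and a neighbor `v` of `u`, the convex hull of the path vectors whose
path either uses `{u,v}` or avoids `u` entirely equals
`P_T ∩ {−x_{u,v} + ∑_{w ∈ N(u)∖{v}} x_{u,w} = 0}` and is a facet of `P_T` of dimension
`|E| − 2`. -/
theorem facet_G [Fintype V] (G : SimpleGraph V)
    (hG : G.IsTree) (hE : 3 ≤ G.edgeSet.ncard)
    (hdeg2 : ∀ w, ¬ IsLeaf G w → (G.neighborSet w).ncard ≠ 2)
    (u v : V) (hu : ¬ IsLeaf G u) (hv : v ∈ G.neighborSet u) :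
    convexHull ℝ {x : Sym2 V → ℝ | ∃ i j : V, i ≠ j ∧ IsLeaf G i ∧ IsLeaf G j ∧
        (onPath G i j s(u, v) ∨ ∀ w ∈ G.neighborSet u, ¬ onPath G i j s(u, w)) ∧
        x = pathVec G i j}
      = pathPolytope G ∩
          {x | - x s(u, v) + ∑ᶠ w ∈ G.neighborSet u \ {v}, x s(u, w) = 0} ∧
    IsFacetOf (pathPolytope G)
      (convexHull ℝ {x : Sym2 V → ℝ | ∃ i j : V, i ≠ j ∧ IsLeaf G i ∧ IsLeaf G j ∧
        (onPath G i j s(u, v) ∨ ∀ w ∈ G.neighborSet u, ¬ onPath G i j s(u, w)) ∧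
        x = pathVec G i j}) ∧
    polyDim (convexHull ℝ {x : Sym2 V → ℝ | ∃ i j : V, i ≠ j ∧ IsLeaf G i ∧ IsLeaf G j ∧
        (onPath G i j s(u, v) ∨ ∀ w ∈ G.neighborSet u, ¬ onPath G i j s(u, w)) ∧
        x = pathVec G i j}) + 2 = G.edgeSet.ncard :=
  facet_G_general G hG hdeg2 u v hu hv
end
end

section
/- Let T = (V,E) be a tree with at least 3 edges and no internal vertex of degree 2, and let {u,v} ∈ E with deg(u) = 3 (u internal). Then the inequality x_{{u,v}} ≥ 0 is redundant: the set P_T ∩ { x : x_{{u,v}} = 0 } is not a facet of P_T, and the inequality x_{{u,v}} ≥ 0 is implied by the inequalities −x_{{u,w}} + ∑_{w' ∈ N(u)\{w}} x_{{u,w'}} ≥ 0 over the three neighbors w of u. -/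
open Classical SimpleGraph

noncomputable section

variable {V : Type*}

/-! Every leaf-to-leaf path of `T` that enters an internal vertex `u` also leaves it, so the
vertex inequalities `x_{uw} ≤ ∑_{w' ∈ N(u) \ {w}} x_{uw'}` are valid on `P_T`. When
`N(u) = {v, a, b}`, those at `a` and `b` add up to `0 ≤ 2 x_{uv}`; on the face `x_{uv} = 0` they
force `x_{ua} = x_{ub}` as well. Following the three branches at `u` out to leaves gives three
vertices of `P_T` at which `(x_{uv}, x_{ua} - x_{ub})` takes the values `(1, 1)`, `(1, -1)` and
`(0, 0)`, so the face has codimension at least two in `P_T`. -/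

lemma Set.exists_eq_insert_insert_of_ncard_eq_three {α : Type*} {s : Set α} {v : α}
    (hs : s.ncard = 3) (hv : v ∈ s) : ∃ a b, v ≠ a ∧ v ≠ b ∧ a ≠ b ∧ s = {v, a, b} := by
  obtain ⟨a, b, hab, hsv⟩ := Set.ncard_eq_two.mp
    (by rw [Set.ncard_sdiff_singleton_of_mem hv, hs] : (s \ {v}).ncard = 2)
  have ha : a ∈ s \ {v} := hsv ▸ by simp
  have hb : b ∈ s \ {v} := hsv ▸ by simp
  refine ⟨a, b, fun h => ha.2 h.symm, fun h => hb.2 h.symm, hab, ?_⟩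
  rw [← hsv, Set.insert_sdiff_singleton, Set.insert_eq_of_mem hv]

lemma finsum_mem_insert_insert_sdiff {α M : Type*} [AddCommMonoid M] {v a b : α} (f : α → M)
    (hva : v ≠ a) (hvb : v ≠ b) (hab : a ≠ b) :
    ∑ᶠ w ∈ ({v, a, b} : Set α) \ {a}, f w = f v + f b := by
  rw [Set.insert_sdiff_of_notMem _ (by simpa using hva), Set.pair_sdiff_left hab,
    finsum_mem_pair hvb]

lemma convex_setOf_apply_le_finsum_mem {ι α : Type*} {s : Set ι} (hs : s.Finite) (e : α)
    (g : ι → α) : Convex ℝ {x : α → ℝ | x e ≤ ∑ᶠ i ∈ s, x (g i)} := by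
  intro x hx y hy a b ha hb _
  simp only [Set.mem_ofPred_eq, Pi.add_apply, Pi.smul_apply, smul_eq_mul] at hx hy ⊢
  rw [finsum_mem_add_distrib hs, ← mul_finsum_mem, ← mul_finsum_mem]
  exact add_le_add (mul_le_mul_of_nonneg_left hx ha) (mul_le_mul_of_nonneg_left hy hb)

lemma Submodule.finrank_add_finrank_le_of_le_ker {K E M : Type*} [DivisionRing K]
    [AddCommGroup E] [Module K E] [FiniteDimensional K E] [AddCommGroup M] [Module K M]
    {U W : Submodule K E} (f : E →ₗ[K] M) (hUW : U ≤ W) (hU : U ≤ LinearMap.ker f)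
    (hW : W.map f = ⊤) : Module.finrank K U + Module.finrank K M ≤ Module.finrank K W := by
  have hrank := (f.domRestrict W).finrank_range_add_finrank_ker
  rw [LinearMap.range_domRestrict, hW, finrank_top, LinearMap.ker_domRestrict] at hrank
  have hker : Module.finrank K U ≤ Module.finrank K ((LinearMap.ker f).comap W.subtype) := by
    rw [← (Submodule.comapSubtypeEquivOfLe hUW).finrank_eq]
    exact Submodule.finrank_mono (Submodule.comap_mono hU)
  omega

lemma polyDim_add_finrank_le {E M : Type*} [AddCommGroup E] [Module ℝ E]
    [FiniteDimensional ℝ E] [AddCommGroup M] [Module ℝ M] {P F : Set E} (hFP : F ⊆ P)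
    (f : E →ₗ[ℝ] M) (hF : ∀ x ∈ F, ∀ y ∈ F, f x = f y) (hP : (vectorSpan ℝ P).map f = ⊤) :
    polyDim F + Module.finrank ℝ M ≤ polyDim P := by
  rw [polyDim, polyDim, direction_affineSpan, direction_affineSpan]
  refine Submodule.finrank_add_finrank_le_of_le_ker f (vectorSpan_mono ℝ hFP) ?_ hP
  rw [vectorSpan_def, Submodule.span_le]
  rintro _ ⟨x, hx, y, hy, rfl⟩
  simp [hF x hx y hy]

lemma Submodule.eq_top_of_mk_one_one_mem_of_mk_one_neg_one_mem {S : Submodule ℝ (ℝ × ℝ)}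
    (h₁ : ((1, 1) : ℝ × ℝ) ∈ S) (h₂ : ((1, -1) : ℝ × ℝ) ∈ S) : S = ⊤ := by
  refine eq_top_iff.mpr fun ⟨s, t⟩ _ => ?_
  convert S.add_mem (S.smul_mem ((s + t) / 2) h₁) (S.smul_mem ((s - t) / 2) h₂) using 1
  ext <;> simp <;> ring

namespace SimpleGraph

variable {G : SimpleGraph V}

lemma IsAcyclic.eq_of_isPath (hG : G.IsAcyclic) {i j : V} {p q : G.Walk i j}
    (hp : p.IsPath) (hq : q.IsPath) : p = q :=
  Subtype.mk.inj <| (hG.subsingleton_path i j).elim ⟨p, hp⟩ ⟨q, hq⟩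

namespace Walk

lemma IsPath.mk_start_mem_edges_iff {u i c w : V} {p : G.Walk u i} (hp : p.IsPath)
    (hc : s(u, c) ∈ p.edges) : s(u, w) ∈ p.edges ↔ w = c :=
  ⟨fun hw => (hp.eq_snd_of_mem_edges hw).trans (hp.eq_snd_of_mem_edges hc).symm,
    fun hw => hw ▸ hc⟩

lemma IsPath.exists_ne_mem_edges {i j u w : V} {p : G.Walk i j} (hp : p.IsPath)
    (hi : u ≠ i) (hj : u ≠ j) (hw : s(u, w) ∈ p.edges) :
    ∃ w', w' ≠ w ∧ s(u, w') ∈ p.edges := by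
  obtain ⟨q, r, hq, -, rfl⟩ :=
    hp.mem_support_iff_exists_append.mp (p.fst_mem_support_of_mem_edges hw)
  have hqn : ¬ q.Nil := not_nil_of_ne hi.symm
  have hrn : ¬ r.Nil := not_nil_of_ne hj
  have hq' : s(u, q.penultimate) ∈ q.edges := by
    simpa [snd_reverse] using q.reverse.mk_start_snd_mem_edges (by simpa using hqn)
  have hr' : s(u, r.snd) ∈ r.edges := r.mk_start_snd_mem_edges hrn
  have hne : q.penultimate ≠ r.snd := hp.ne_of_mem_support_of_append (r.adj_snd hrn).ne'
    (q.getVert_mem_support _) (r.getVert_mem_support 1)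
  simp only [edges_append, List.mem_append] at hw ⊢
  rcases hw with hw | hw
  · exact ⟨r.snd, hq.eq_penultimate_of_mem_edges hw ▸ hne.symm, .inr hr'⟩
  · exact ⟨q.penultimate, hp.of_append_right.eq_snd_of_mem_edges hw ▸ hne, .inl hq'⟩

end Walk

lemma IsAcyclic.exists_isLeaf_mk_mem_edges [Finite V] (hG : G.IsAcyclic) {u a : V}
    (hua : G.Adj u a) :
    ∃ (i : V) (p : G.Walk u i), p.IsPath ∧ s(u, a) ∈ p.edges ∧ IsLeaf G i := by
  have := Fintype.ofFinite V
  -- a longest path through `s(u, a)` can only end at a leaf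
  let S := {n | ∃ (i : V) (p : G.Walk u i), p.IsPath ∧ s(u, a) ∈ p.edges ∧ p.length = n}
  have hS : S.Finite := (Set.finite_lt_nat (Fintype.card V)).subset
    fun n ⟨_, _, hp, _, hn⟩ => hn ▸ hp.length_lt
  obtain ⟨_, ⟨i, p, hp, ha, rfl⟩, hmax⟩ :=
    hS.exists_maximal ⟨1, a, hua.toWalk, by simpa using hua.ne, by simp, rfl⟩
  have hnil : ¬ p.Nil := Walk.edges_eq_nil.not.mp (List.ne_nil_of_mem ha)
  refine ⟨i, p, hp, ha, p.penultimate, (p.adj_penultimate hnil).symm, fun w hiw => ?_⟩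
  refine hG.eq_penultimate_of_adj_end hp hiw (by_contra fun hw => ?_)
  have := hmax ⟨w, p.concat hiw, hp.concat hw hiw, by simp [Walk.edges_concat, ha], rfl⟩
  simp at this

lemma IsAcyclic.isPath_reverse_append (hG : G.IsAcyclic) {u i j : V} {p : G.Walk u i}
    {q : G.Walk u j} (hp : p.IsPath) (hq : q.IsPath) (hpq : p.snd ≠ q.snd) :
    (p.reverse.append q).IsPath := by
  have hmeet : ∀ z ∈ p.support, z ∈ q.support → z = u := fun z hzp hzq => by_contra fun hz => by
    apply hpq
    rw [← Walk.snd_takeUntil hz p hzp, ← Walk.snd_takeUntil hz q hzq,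
      hG.eq_of_isPath (hp.takeUntil hzp) (hq.takeUntil hzq)]
  have hq' := hq.support_nodup
  rw [← q.cons_tail_support, List.nodup_cons] at hq'
  rw [Walk.isPath_def, Walk.support_append, Walk.support_reverse]
  refine (List.nodup_reverse.mpr hp.support_nodup).append hq'.2 fun z hzp hzq => ?_
  obtain rfl := hmeet z (List.mem_reverse.mp hzp) (List.mem_of_mem_tail hzq)
  exact hq'.1 hzq

lemma IsAcyclic.ne_of_isPath_of_mk_mem_edges (hG : G.IsAcyclic) {u i j c d : V}
    {p : G.Walk u i} {q : G.Walk u j} (hp : p.IsPath) (hq : q.IsPath) (hc : s(u, c) ∈ p.edges)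
    (hd : s(u, d) ∈ q.edges) (hcd : c ≠ d) : i ≠ j := by
  rintro rfl
  exact hcd ((hp.mk_start_mem_edges_iff hc).mp (hG.eq_of_isPath hq hp ▸ hd)).symm

end SimpleGraph

open SimpleGraph

section PathPolytope

variable {G : SimpleGraph V}

lemma IsLeaf.ncard_neighborSet {u : V} (hu : IsLeaf G u) : (G.neighborSet u).ncard = 1 := by
  obtain ⟨w, hw, hw'⟩ := hu
  rw [Set.ncard_eq_one]
  exact ⟨w, Set.ext fun z => ⟨hw' z, fun h => h ▸ hw⟩⟩

lemma pathVec_apply_of_isPath (hG : G.IsAcyclic) {i j : V} {p : G.Walk i j} (hp : p.IsPath)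
    (e : Sym2 V) : pathVec G i j e = if e ∈ p.edges then 1 else 0 := by
  have : onPath G i j e ↔ e ∈ p.edges :=
    ⟨fun ⟨q, hq, he⟩ => hG.eq_of_isPath hq hp ▸ he, fun he => ⟨p, hp, he⟩⟩
  simp only [pathVec, this]

lemma pathVec_apply_mk_of_mk_mem_edges (hG : G.IsAcyclic) {u i j c d : V} {p : G.Walk u i}
    {q : G.Walk u j} (hp : p.IsPath) (hq : q.IsPath) (hc : s(u, c) ∈ p.edges)
    (hd : s(u, d) ∈ q.edges) (hcd : c ≠ d) (w : V) :
    pathVec G i j s(u, w) = if w = c ∨ w = d then 1 else 0 := by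
  have hpq : p.snd ≠ q.snd := by
    rwa [← hp.eq_snd_of_mem_edges hc, ← hq.eq_snd_of_mem_edges hd]
  simp only [pathVec_apply_of_isPath hG (hG.isPath_reverse_append hp hq hpq), Walk.edges_append,
    Walk.edges_reverse, List.mem_append, List.mem_reverse, hp.mk_start_mem_edges_iff hc,
    hq.mk_start_mem_edges_iff hd]

lemma pathVec_mem_pathPolytope {i j : V} (hij : i ≠ j) (hi : IsLeaf G i) (hj : IsLeaf G j) :
    pathVec G i j ∈ pathPolytope G :=
  subset_convexHull ℝ _ ⟨i, j, hij, hi, hj, rfl⟩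

lemma pathVec_le_finsum [Finite V] (hG : G.IsTree) {i j u : V} (hi : IsLeaf G i)
    (hj : IsLeaf G j) (hu : ¬ IsLeaf G u) (w : V) :
    pathVec G i j s(u, w) ≤ ∑ᶠ w' ∈ G.neighborSet u \ {w}, pathVec G i j s(u, w') := by
  obtain ⟨p, hp, -⟩ := hG.existsUnique_path i j
  rw [finsum_mem_eq_finite_toFinset_sum _ (Set.toFinite _)]
  have hnonneg : ∀ e, 0 ≤ pathVec G i j e := fun e => by unfold pathVec; split_ifs <;> norm_num
  by_cases hw : s(u, w) ∈ p.edges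
  · obtain ⟨w', hw'w, hw'⟩ := hp.exists_ne_mem_edges (fun h : u = i => hu (h ▸ hi))
      (fun h : u = j => hu (h ▸ hj)) hw
    calc pathVec G i j s(u, w) ≤ 1 := by unfold pathVec; split_ifs <;> norm_num
      _ = pathVec G i j s(u, w') := by rw [pathVec_apply_of_isPath hG.isAcyclic hp, if_pos hw']
      _ ≤ _ := Finset.single_le_sum (fun _ _ => hnonneg _)
          (by simpa using ⟨p.adj_of_mem_edges hw', hw'w⟩)
  · rw [pathVec_apply_of_isPath hG.isAcyclic hp, if_neg hw]
    exact Finset.sum_nonneg fun _ _ => hnonneg _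

theorem le_finsum_of_mem_pathPolytope [Finite V] (hG : G.IsTree) {u : V} (hu : ¬ IsLeaf G u)
    (w : V) {x : Sym2 V → ℝ} (hx : x ∈ pathPolytope G) :
    x s(u, w) ≤ ∑ᶠ w' ∈ G.neighborSet u \ {w}, x s(u, w') := by
  refine convexHull_min ?_ (convex_setOf_apply_le_finsum_mem (Set.toFinite _) _ _) hx
  rintro _ ⟨i, j, -, hi, hj, rfl⟩
  exact pathVec_le_finsum hG hi hj hu w

lemma le_add_of_mem_pathPolytope [Finite V] (hG : G.IsTree) {u v a b : V} (hu : ¬ IsLeaf G u)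
    (hN : G.neighborSet u = {v, a, b}) (hva : v ≠ a) (hvb : v ≠ b) (hab : a ≠ b)
    {x : Sym2 V → ℝ} (hx : x ∈ pathPolytope G) : x s(u, a) ≤ x s(u, v) + x s(u, b) := by
  simpa only [hN, finsum_mem_insert_insert_sdiff _ hva hvb hab] using
    le_finsum_of_mem_pathPolytope hG hu a hx

lemma polyDim_inter_add_two_le [Finite V] (hG : G.IsTree) {u v a b : V} (hu : ¬ IsLeaf G u)
    (hN : G.neighborSet u = {v, a, b}) (hva : v ≠ a) (hvb : v ≠ b) (hab : a ≠ b) :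
    polyDim (pathPolytope G ∩ {x | x s(u, v) = 0}) + 2 ≤ polyDim (pathPolytope G) := by
  have hN' : G.neighborSet u = {v, b, a} := hN.trans (by rw [Set.pair_comm])
  have hadj : ∀ w ∈ ({v, a, b} : Set V), G.Adj u w := fun w hw => by
    rwa [← mem_neighborSet, hN]
  obtain ⟨iv, pv, hpv, hv, hiv⟩ := hG.isAcyclic.exists_isLeaf_mk_mem_edges (hadj v (by simp))
  obtain ⟨ia, pa, hpa, ha, hia⟩ := hG.isAcyclic.exists_isLeaf_mk_mem_edges (hadj a (by simp))
  obtain ⟨ib, pb, hpb, hb, hib⟩ := hG.isAcyclic.exists_isLeaf_mk_mem_edges (hadj b (by simp))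
  let π : Sym2 V → (Sym2 V → ℝ) →ₗ[ℝ] ℝ := LinearMap.proj
  let f : (Sym2 V → ℝ) →ₗ[ℝ] ℝ × ℝ := (π s(u, v)).prod (π s(u, a) - π s(u, b))
  have hf : ∀ x, f x = (x s(u, v), x s(u, a) - x s(u, b)) := fun _ => rfl
  suffices h : polyDim (pathPolytope G ∩ {x | x s(u, v) = 0}) + Module.finrank ℝ (ℝ × ℝ) ≤
      polyDim (pathPolytope G) by simpa using h
  refine polyDim_add_finrank_le Set.inter_subset_left f ?_ ?_
  · rintro x ⟨hxP, hx0 : x s(u, v) = 0⟩ y ⟨hyP, hy0 : y s(u, v) = 0⟩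
    have hxa := le_add_of_mem_pathPolytope hG hu hN hva hvb hab hxP
    have hxb := le_add_of_mem_pathPolytope hG hu hN' hvb hva hab.symm hxP
    have hya := le_add_of_mem_pathPolytope hG hu hN hva hvb hab hyP
    have hyb := le_add_of_mem_pathPolytope hG hu hN' hvb hva hab.symm hyP
    simp only [hf, Prod.mk.injEq]
    constructor <;> linarith
  · have hcva := pathVec_mem_pathPolytope
      (hG.isAcyclic.ne_of_isPath_of_mk_mem_edges hpv hpa hv ha hva) hiv hia
    have hcvb := pathVec_mem_pathPolytope
      (hG.isAcyclic.ne_of_isPath_of_mk_mem_edges hpv hpb hv hb hvb) hiv hib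
    have hcab := pathVec_mem_pathPolytope
      (hG.isAcyclic.ne_of_isPath_of_mk_mem_edges hpa hpb ha hb hab) hia hib
    have hval_va := pathVec_apply_mk_of_mk_mem_edges hG.isAcyclic hpv hpa hv ha hva
    have hval_vb := pathVec_apply_mk_of_mk_mem_edges hG.isAcyclic hpv hpb hv hb hvb
    have hval_ab := pathVec_apply_mk_of_mk_mem_edges hG.isAcyclic hpa hpb ha hb hab
    refine Submodule.eq_top_of_mk_one_one_mem_of_mk_one_neg_one_mem
      ⟨_, vsub_mem_vectorSpan ℝ hcva hcab, ?_⟩ ⟨_, vsub_mem_vectorSpan ℝ hcvb hcab, ?_⟩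
    · simp [hf, hval_va, hval_ab, hva, hvb, hab, hab.symm, hva.symm, hvb.symm]
    · simp [hf, hval_vb, hval_ab, hva, hvb, hab, hab.symm, hva.symm, hvb.symm]

end PathPolytope

theorem degree_three_redundant_general [Fintype V] (G : SimpleGraph V)
    (hG : G.IsTree)
    (u v : V) (huv : G.Adj u v) (hu3 : (G.neighborSet u).ncard = 3) :
    ¬ IsFacetOf (pathPolytope G) (pathPolytope G ∩ {x | x s(u, v) = 0}) ∧
    (∀ x : Sym2 V → ℝ,
      (∀ w ∈ G.neighborSet u,
        0 ≤ - x s(u, w) + ∑ᶠ w' ∈ G.neighborSet u \ {w}, x s(u, w')) →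
      0 ≤ x s(u, v)) := by
  obtain ⟨a, b, hva, hvb, hab, hN⟩ := Set.exists_eq_insert_insert_of_ncard_eq_three hu3 huv
  have hu : ¬ IsLeaf G u := fun h => by simp [h.ncard_neighborSet] at hu3
  refine ⟨fun hfacet => ?_, fun x hx => ?_⟩
  · have hcodim := polyDim_inter_add_two_le hG hu hN hva hvb hab
    have hdim := hfacet.2
    omega
  · have hxa := hx a (by simp [hN])
    have hxb := hx b (by simp [hN])
    rw [hN, finsum_mem_insert_insert_sdiff _ hva hvb hab] at hxa
    rw [hN, Set.pair_comm, finsum_mem_insert_insert_sdiff _ hvb hva hab.symm] at hxb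
    linarith

/-- At an edge `{u,v}` whose endpoint `u` is internal of degree 3, the
inequality `x_{u,v} ≥ 0` is redundant: `P_T ∩ {x_{u,v} = 0}` is not a facet of `P_T`, and
`x_{u,v} ≥ 0` is implied by the three inequalities at `u`. -/
theorem degree_three_redundant [Fintype V] (G : SimpleGraph V)
    (hG : G.IsTree) (hE : 3 ≤ G.edgeSet.ncard)
    (hdeg2 : ∀ w, ¬ IsLeaf G w → (G.neighborSet w).ncard ≠ 2)
    (u v : V) (huv : G.Adj u v) (hu3 : (G.neighborSet u).ncard = 3) :
    ¬ IsFacetOf (pathPolytope G) (pathPolytope G ∩ {x | x s(u, v) = 0}) ∧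
    (∀ x : Sym2 V → ℝ,
      (∀ w ∈ G.neighborSet u,
        0 ≤ - x s(u, w) + ∑ᶠ w' ∈ G.neighborSet u \ {w}, x s(u, w')) →
      0 ≤ x s(u, v)) :=
  degree_three_redundant_general G hG u v huv hu3
end
end
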